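/- Let 𝔄 = (ℕ, succ) be the structure with universe ℕ and binary relation succ = {(n, n+1) | n ∈ ℕ}. For m ∈ ℕ, let I_m be the structure with universe U_m = {w ∈ List ℕ | [m] is a prefix of w}, equipped with: the prefix relation restricted to U_m, the relation {(w ++ [a], w ++ [b]) | w ∈ U_m, b = a + 1}, the constant [m], and the clone predicate {w ++ [a, a] | w ++ [a, a] ∈ U_m}. Then for all m, n ∈ ℕ, the structures I_m and I_n are isomorphic (as relational structures) if and only if m = n. (This shows that the rooted subtrees of the finitary Muchnik iteration of (ℕ, succ) are pairwise non-isomorphic.) -/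

import Mathlib

open FirstOrder

namespace Paper

/-- The relation symbols of the Muchnik iteration of `(ℕ, succ)`: the prefix order, the
lifted successor relation, and the clone predicate. -/
inductive NatIterRel : ℕ → Type
  | pre : NatIterRel 2
  | succ : NatIterRel 2
  | clone : NatIterRel 1

/-- The language of the Muchnik iteration of `(ℕ, succ)`: the relations above and a constant
(for the root). -/
def natIterLang : Language where
  Functions n := match n with
    | 0 => Unit
    | _ + 1 => Empty
  Relations := NatIterRel

/-- The universe `U_m`: all words over `ℕ` having `[m]` as a prefix. -/
def Um (m : ℕ) : Type := {w : List ℕ // [m] <+: w}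

/-- The structure `I_m`: the subtree of the finitary Muchnik iteration of `(ℕ, succ)` rooted
at `[m]`, with the prefix relation, the lifted successor relation, the constant `[m]`, and
the clone predicate. -/
instance ImStructure (m : ℕ) : natIterLang.Structure (Um m) where
  funMap {n} f := match n, f with
    | 0, _ => fun _ => (⟨[m], List.prefix_refl _⟩ : Um m)
    | _ + 1, f => f.elim
  RelMap {n} r := match n, r with
    | 2, NatIterRel.pre => fun x => (x 0).val <+: (x 1).val
    | 2, NatIterRel.succ => fun x => ∃ (w : List ℕ) (a : ℕ),
        [m] <+: w ∧ (x 0).val = w ++ [a] ∧ (x 1).val = w ++ [a + 1]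
    | 1, NatIterRel.clone => fun x => ∃ (w : List ℕ) (a : ℕ), (x 0).val = w ++ [a, a]


/-! An isomorphism `I_m ≃ I_n` fixes the root and hence, being a prefix-order isomorphism,
maps the children `[m, a]` of the root onto the children `[n, b]`. On the children, `succ` is
the successor of the last letter, so `[m, 0]` (the only child without a predecessor) goes to
`[n, 0]`, and by induction `[m, a]` goes to `[n, a]`. Now `[m, m]` is a clone, so `[n, m]` is
one too, forcing `n = m`. -/

/- The relations `succ` and `clone` of `I_k`, read on the underlying words. -/
def IsSuccPair (k : ℕ) (u v : List ℕ) : Prop :=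
  ∃ (w : List ℕ) (a : ℕ), [k] <+: w ∧ u = w ++ [a] ∧ v = w ++ [a + 1]

def IsClone (u : List ℕ) : Prop :=
  ∃ (w : List ℕ) (a : ℕ), u = w ++ [a, a]

lemma isSuccPair_pair_iff {k a : ℕ} {v : List ℕ} : IsSuccPair k [k, a] v ↔ v = [k, a + 1] := by
  constructor
  · rintro ⟨w, c, -, hu, rfl⟩
    obtain ⟨rfl, hc⟩ := List.append_inj' (show [k] ++ [a] = w ++ [c] from hu) rfl
    simp_all
  · rintro rfl
    exact ⟨[k], a, List.prefix_refl _, rfl, rfl⟩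

lemma not_isSuccPair_append_zero (k : ℕ) (u w : List ℕ) : ¬ IsSuccPair k u (w ++ [0]) := by
  rintro ⟨w', a, -, -, h⟩
  simpa using (List.append_inj' h rfl).2

lemma isClone_pair_iff {k a : ℕ} : IsClone [k, a] ↔ k = a := by
  constructor
  · rintro ⟨w, c, h⟩
    have hw : w = [] := List.eq_nil_of_length_eq_zero (by simpa using congrArg List.length h)
    subst hw
    simp_all
  · rintro rfl
    exact ⟨[], k, rfl⟩

namespace Um

def root (k : ℕ) : Um k := ⟨[k], List.prefix_refl _⟩

def child (k a : ℕ) : Um k := ⟨[k, a], ⟨[a], rfl⟩⟩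

/-- The children of the root, defined as its covers in the prefix order so that isomorphisms
preserve them. -/
def IsChild {k : ℕ} (x : Um k) : Prop :=
  x ≠ root k ∧ ∀ y : Um k, y.val <+: x.val → y = root k ∨ y = x

lemma child_ne_root (k a : ℕ) : child k a ≠ root k :=
  fun h => by simpa [child, root] using congrArg Subtype.val h

lemma isChild_iff {k : ℕ} {x : Um k} : IsChild x ↔ ∃ a, x = child k a := by
  constructor
  · rintro ⟨hne, hmin⟩
    obtain ⟨t, ht⟩ := x.2
    cases t with
    | nil => exact absurd (Subtype.ext ht.symm) hne
    | cons a t =>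
      rcases hmin (child k a) ⟨t, by rw [← ht]; rfl⟩ with h | h
      · exact absurd h (child_ne_root k a)
      · exact ⟨a, h.symm⟩
  · rintro ⟨a, rfl⟩
    refine ⟨child_ne_root k a, fun y hy => ?_⟩
    obtain ⟨t, ht⟩ := y.2
    rw [← ht, List.singleton_append] at hy
    rcases List.prefix_cons_iff.mp (List.cons_prefix_cons.mp hy).2 with rfl | ⟨t, rfl, ht'⟩
    · exact Or.inl (Subtype.ext ht.symm)
    · obtain rfl := List.prefix_nil.mp ht'
      exact Or.inr (Subtype.ext ht.symm)

end Um

section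
variable {m n : ℕ} (g : Um m ≃[natIterLang] Um n)
open Um

lemma map_root : g (root m) = root n :=
  g.map_fun (n := 0) (Unit.unit : natIterLang.Functions 0) ![]

lemma prefix_map_iff (x y : Um m) : (g x).val <+: (g y).val ↔ x.val <+: y.val :=
  g.map_rel NatIterRel.pre ![x, y]

lemma isSuccPair_map_iff (x y : Um m) :
    IsSuccPair n (g x).val (g y).val ↔ IsSuccPair m x.val y.val :=
  g.map_rel NatIterRel.succ ![x, y]

lemma isClone_map_iff (x : Um m) : IsClone (g x).val ↔ IsClone x.val :=
  g.map_rel NatIterRel.clone ![x]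

lemma IsChild.map {x : Um m} (hx : IsChild x) : IsChild (g x) := by
  refine ⟨fun h => hx.1 (g.injective (by rw [h, map_root])), fun y hy => ?_⟩
  rw [← g.apply_symm_apply y] at hy ⊢
  rcases hx.2 (g.symm y) ((prefix_map_iff g _ _).mp hy) with h | h
  · exact Or.inl (by rw [h, map_root])
  · exact Or.inr (by rw [h])

lemma map_child_zero : g (child m 0) = child n 0 := by
  obtain ⟨b, hb⟩ := isChild_iff.mp (IsChild.map g (isChild_iff.mpr ⟨0, rfl⟩))
  cases b with
  | zero => exact hb
  | succ b =>
    have hsucc : IsSuccPair n (g (g.symm (child n b))).val (g (child m 0)).val := by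
      rw [g.apply_symm_apply, hb]
      exact isSuccPair_pair_iff.mpr rfl
    exact absurd ((isSuccPair_map_iff g _ _).mp hsucc) (not_isSuccPair_append_zero m _ [m])

lemma map_child (a : ℕ) : g (child m a) = child n a := by
  induction a with
  | zero => exact map_child_zero g
  | succ a ih =>
    have hsucc := (isSuccPair_map_iff g (child m a) (child m (a + 1))).mpr
      (isSuccPair_pair_iff.mpr rfl)
    rw [ih] at hsucc
    exact Subtype.ext (isSuccPair_pair_iff.mp hsucc)

end

/-- the structures `I_m` and `I_n` are isomorphic iff `m = n`. -/
theorem Im_iso_iff (m n : ℕ) : Nonempty (Um m ≃[natIterLang] Um n) ↔ m = n := by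
  refine ⟨fun ⟨g⟩ => ?_, fun h => h ▸ ⟨Language.Equiv.refl _ _⟩⟩
  have hclone : IsClone (g (Um.child m m)).val :=
    (isClone_map_iff g _).mpr (isClone_pair_iff.mpr rfl)
  rw [map_child g] at hclone
  exact (isClone_pair_iff.mp hclone).symm

end Paper
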